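/- arXiv:1510.07753 — 7 statements merged into one kernel-verified Lean document; each statement's English description precedes it below -/
import Mathlib

section
/- Let l, k, m be positive integers with k ≤ l, and let s₁,…,s_m be distinct nonzero complex numbers. For a = 0,…,k−1 and s ∈ ℂ define the vector v_a(s) ∈ ℂ^{km} whose j-th entry (j = 0,…,km−1) is the binomial coefficient C(l+j, a) times s^{l+j}. Then the km vectors {v_a(s_i) : a = 0,…,k−1, i = 1,…,m} are linearly independent in ℂ^{km}. -/
/-!
Pair a vanishing linear combination `∑ g (a, i) • v_a(s_i)` with the Hermite functional
`P ↦ ∑ g (a, i) · s_iᵃ / a! · P⁽ᵃ⁾(s_i)`. Since `sᵃ / a! · (Xⁿ)⁽ᵃ⁾(s) = C(n, a) sⁿ`, the `j`-th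
coordinate of the combination is the value of this functional at `X^(l+j)`, so the functional
vanishes on `Xˡ · Q` for every `Q` of degree `< km`. Testing it against
`Xˡ (X - s_{i₀})^{a₀} ∏_{i ≠ i₀} (X - s_i)^k`, with `a₀` maximal among the nonzero coefficients,
kills every term except the one of index `(a₀, i₀)`, which therefore vanishes.
-/

open Polynomial Finset
open scoped Nat

namespace Polynomial

variable {R : Type*} [CommRing R]

theorem eval_iterate_derivative_eq_zero_of_X_sub_C_pow_dvd {r : R} {n b : ℕ} {P : R[X]}
    (hP : (X - C r) ^ n ∣ P) (hb : b < n) : (derivative^[b] P).eval r = 0 :=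
  dvd_iff_isRoot.mp <| (dvd_pow_self _ (Nat.sub_ne_zero_of_lt hb)).trans
    (pow_sub_dvd_iterate_derivative_of_pow_dvd b hP)

theorem eval_iterate_derivative_X_sub_C_pow_mul_self (r : R) (a : ℕ) (Q : R[X]) :
    (derivative^[a] ((X - C r) ^ a * Q)).eval r = a ! * Q.eval r := by
  rw [iterate_derivative_mul, eval_finsetSum, sum_eq_single 0]
  · simp [iterate_derivative_X_sub_pow_self]
  · intro j hj hj0
    have hlt : a - j < a := by simp only [mem_range] at hj; omega
    rw [eval_smul, eval_mul,
      eval_iterate_derivative_eq_zero_of_X_sub_C_pow_dvd dvd_rfl hlt, zero_mul, smul_zero]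
  · simp

theorem sum_mul_eval_iterate_derivative_mul_eq_zero {κ : Type*} [Fintype κ] {c x : κ → R}
    {d : κ → ℕ} {F : R[X]} {N : ℕ}
    (h : ∀ j < N, ∑ p, c p * (derivative^[d p] (F * X ^ j)).eval (x p) = 0)
    {Q : R[X]} (hQ : Q.natDegree < N) :
    ∑ p, c p * (derivative^[d p] (F * Q)).eval (x p) = 0 := by
  rw [Q.as_sum_range_C_mul_X_pow' hQ, mul_sum]
  simp only [mul_left_comm _ (C _), iterate_derivative_sum, iterate_derivative_C_mul,
    eval_finsetSum, eval_mul, eval_C, mul_sum, mul_left_comm (c _)]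
  rw [sum_comm]
  exact sum_eq_zero fun j hj => by rw [← mul_sum, h j (mem_range.mp hj), mul_zero]

theorem natDegree_X_sub_C_pow_mul_prod_X_sub_C_pow [Nontrivial R] {ι : Type*} (r : R)
    (s : ι → R) (a k : ℕ) (t : Finset ι) :
    ((X - C r) ^ a * ∏ i ∈ t, (X - C (s i)) ^ k).natDegree = a + #t * k := by
  rw [((monic_X_sub_C _).pow _).natDegree_mul
      (monic_prod_of_monic _ _ fun i _ => (monic_X_sub_C _).pow _),
    natDegree_prod_of_monic _ _ fun i _ => (monic_X_sub_C _).pow _]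
  simp only [(monic_X_sub_C _).natDegree_pow, natDegree_X_sub_C, mul_one, sum_const, smul_eq_mul]

theorem pow_div_factorial_mul_eval_iterate_derivative_X_pow {K : Type*} [Field K] [CharZero K]
    (x : K) (n a : ℕ) :
    x ^ a / a ! * (derivative^[a] (X ^ n)).eval x = n.choose a * x ^ n := by
  rw [iterate_derivative_X_pow_eq_natCast_mul, eval_mul, eval_natCast, eval_pow, eval_X,
    Nat.descFactorial_eq_factorial_mul_choose]
  rcases le_or_gt a n with han | hna
  · have hfac : (a ! : K) ≠ 0 := by exact_mod_cast a.factorial_ne_zero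
    rw [← Nat.sub_add_cancel han, pow_add, Nat.add_sub_cancel]
    push_cast
    field_simp
  · simp [Nat.choose_eq_zero_of_lt hna]

end Polynomial

theorem eq_zero_of_sum_eval_iterate_derivative_mul_eq_zero {K ι : Type*} [Field K] [CharZero K]
    [Fintype ι] {k : ℕ} {s : ι → K}
    (hs : Function.Injective s) {F : K[X]} (hF : ∀ i, F.eval (s i) ≠ 0)
    {c : Fin k × ι → K}
    (h : ∀ Q : K[X], Q.natDegree < k * Fintype.card ι →
      ∑ p, c p * (derivative^[p.1] (F * Q)).eval (s p.2) = 0) :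
    c = 0 := by
  classical
  by_contra hc
  obtain ⟨⟨a₀, i₀⟩, hc₀, hmax⟩ := exists_max_image {p | c p ≠ 0} (fun p => (p.1 : ℕ))
    (by simpa [Finset.Nonempty, funext_iff] using hc)
  simp only [mem_filter, mem_univ, true_and] at hc₀ hmax
  set G : K[X] := ∏ i ∈ univ.erase i₀, (X - C (s i)) ^ k
  have hdeg : ((X - C (s i₀)) ^ (a₀ : ℕ) * G).natDegree < k * Fintype.card ι := by
    have hcard := Finset.card_erase_add_one (mem_univ i₀)
    rw [natDegree_X_sub_C_pow_mul_prod_X_sub_C_pow, card_univ] at *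
    nlinarith [a₀.is_lt]
  have hother : ∀ p ∈ univ, p ≠ (a₀, i₀) →
      c p * (derivative^[p.1] (F * ((X - C (s i₀)) ^ (a₀ : ℕ) * G))).eval (s p.2) = 0 := by
    rintro ⟨a, i⟩ - hai
    by_cases hi : i = i₀
    · subst hi
      rcases lt_trichotomy (a : ℕ) a₀ with hlt | heq | hgt
      · exact mul_eq_zero_of_right _ (eval_iterate_derivative_eq_zero_of_X_sub_C_pow_dvd
          (dvd_mul_of_dvd_right (dvd_mul_right _ _) _) hlt)
      · exact (hai (by rw [Fin.ext heq])).elim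
      · exact mul_eq_zero_of_left (not_not.mp fun hca => (hmax _ hca).not_gt hgt) _
    · refine mul_eq_zero_of_right _ (eval_iterate_derivative_eq_zero_of_X_sub_C_pow_dvd ?_ a.is_lt)
      exact dvd_mul_of_dvd_right (dvd_mul_of_dvd_right
        (dvd_prod_of_mem (fun i => (X - C (s i)) ^ k) (mem_erase.mpr ⟨hi, mem_univ i⟩)) _) _
  have hsum := h _ hdeg
  rw [sum_eq_single_of_mem _ (mem_univ _) hother, mul_left_comm,
    eval_iterate_derivative_X_sub_C_pow_mul_self] at hsum
  refine mul_ne_zero hc₀ (mul_ne_zero (by exact_mod_cast a₀.val.factorial_ne_zero) ?_) hsum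
  rw [eval_mul, eval_prod]
  refine mul_ne_zero (hF i₀) (prod_ne_zero_iff.mpr fun i hi => ?_)
  rw [eval_pow, eval_sub, eval_X, eval_C]
  exact pow_ne_zero _ (sub_ne_zero.mpr fun h => (mem_erase.mp hi).1 (hs h).symm)

theorem stmt1_general (l k m : ℕ)
    (s : Fin m → ℂ) (hs_inj : Function.Injective s) (hs_ne : ∀ i, s i ≠ 0) :
    LinearIndependent ℂ (fun p : Fin k × Fin m =>
      (fun j : Fin (k * m) =>
        ((Nat.choose (l + (j : ℕ)) (p.1 : ℕ) : ℂ)) * s p.2 ^ (l + (j : ℕ)) :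
        Fin (k * m) → ℂ)) := by
  rw [Fintype.linearIndependent_iff]
  intro g hg
  have hcoord : ∀ j < k * m,
      ∑ p : Fin k × Fin m, g p * ((l + j).choose p.1 * s p.2 ^ (l + j)) = 0 := fun j hj => by
    simpa [Finset.sum_apply] using congrFun hg ⟨j, hj⟩
  set c : Fin k × Fin m → ℂ := fun p => g p * (s p.2 ^ (p.1 : ℕ) / (p.1 : ℕ)!)
  have hc : c = 0 := by
    refine eq_zero_of_sum_eval_iterate_derivative_mul_eq_zero hs_inj (F := X ^ l)
      (by simpa using fun i => pow_ne_zero l (hs_ne i))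
      fun Q hQ => sum_mul_eval_iterate_derivative_mul_eq_zero (fun j hj => ?_) hQ
    simp only [c, ← pow_add, mul_assoc, pow_div_factorial_mul_eval_iterate_derivative_X_pow]
    exact hcoord j (by simpa using hj)
  intro p
  simpa [c, hs_ne, Nat.factorial_ne_zero] using congrFun hc p

/-- For `k ≤ l` and distinct nonzero `s₁,…,s_m ∈ ℂ`, the vectors
`v_a(s_i) ∈ ℂ^{km}` with entries `(v_a(s))_j = C(l+j, a)·s^{l+j}` (for
`a = 0,…,k−1`, `j = 0,…,km−1`) are linearly independent. -/
theorem stmt1 (l k m : ℕ) (hl : 0 < l) (hk : 0 < k) (hm : 0 < m) (hkl : k ≤ l)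
    (s : Fin m → ℂ) (hs_inj : Function.Injective s) (hs_ne : ∀ i, s i ≠ 0) :
    LinearIndependent ℂ (fun p : Fin k × Fin m =>
      (fun j : Fin (k * m) =>
        ((Nat.choose (l + (j : ℕ)) (p.1 : ℕ) : ℂ)) * s p.2 ^ (l + (j : ℕ)) :
        Fin (k * m) → ℂ)) :=
  stmt1_general l k m s hs_inj hs_ne
end

section
/- Let l, k, m be positive integers with k ≤ l, and let s₁,…,s_m be distinct nonzero complex numbers. For a = 0,…,k−1 and s ∈ ℂ define the vector w_a(s) ∈ ℂ^{km} whose j-th entry (j = 0,…,km−1) is (l+j)^a · s^{l+j}. Then the km vectors {w_a(s_i) : a = 0,…,k−1, i = 1,…,m} are linearly independent in ℂ^{km}. -/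
/-!
A vector `d` orthogonal to every `w_a(sᵢ)` gives the polynomial `P = X^l · Σ_j d_j X^j` with
`((X d/dX)^a P)(sᵢ) = 0` for all `a < k`. Since `X d/dX` lowers the multiplicity of a nonzero
root by exactly one, each `sᵢ` is a root of `P` of multiplicity at least `k`, so
`∏ᵢ (X - sᵢ)^k` divides `Σ_j d_j X^j`, whose degree is less than `km`; hence `d = 0`.
With as many vectors as coordinates, this means the `w_a(sᵢ)` are linearly independent.
-/

open Polynomial

namespace Polynomial

section CommSemiring

variable (R : Type*) [CommSemiring R]

noncomputable def eulerOp : R[X] →ₗ[R] R[X] :=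
  LinearMap.mulLeft R X ∘ₗ derivative

variable {R}

theorem eulerOp_apply (p : R[X]) : eulerOp R p = X * derivative p := rfl

theorem eulerOp_monomial (n : ℕ) (c : R) : eulerOp R (monomial n c) = monomial n (n * c) := by
  cases n with
  | zero => simp [eulerOp_apply]
  | succ n => rw [eulerOp_apply, derivative_monomial, X_mul_monomial, mul_comm]; rfl

theorem eulerOp_pow_monomial (a n : ℕ) (c : R) :
    (eulerOp R ^ a) (monomial n c) = monomial n ((n : R) ^ a * c) := by
  induction a with
  | zero => simp
  | succ a ih => rw [pow_succ', Module.End.mul_apply, ih, eulerOp_monomial, ← mul_assoc, pow_succ']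

theorem eval_eulerOp_pow_X_pow_mul_sum_monomial {n : ℕ} (a l : ℕ) (d : Fin n → R) (x : R) :
    ((eulerOp R ^ a) (X ^ l * ∑ j : Fin n, monomial (j : ℕ) (d j))).eval x =
      ∑ j : Fin n, ((l + j : ℕ) : R) ^ a * x ^ (l + j) * d j := by
  simp only [Finset.mul_sum, X_pow_mul_monomial, map_sum, eulerOp_pow_monomial, eval_finsetSum,
    eval_monomial]
  refine Finset.sum_congr rfl fun j _ => ?_
  push_cast
  ring

end CommSemiring

section CharZero

variable {R : Type*} [CommRing R] [IsDomain R] [CharZero R] {p : R[X]} {x : R}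

theorem eulerOp_ne_zero_of_isRoot (hp : p ≠ 0) (hx : p.IsRoot x) : eulerOp R p ≠ 0 :=
  mul_ne_zero X_ne_zero (derivative_ne_zero.mpr (natDegree_pos_of_eval₂_root hp (RingHom.id R) hx
    fun _ => id).ne')

theorem rootMultiplicity_eulerOp (hx0 : x ≠ 0) (hp : p ≠ 0) (hx : p.IsRoot x) :
    (eulerOp R p).rootMultiplicity x = p.rootMultiplicity x - 1 := by
  have hθ : X * derivative p ≠ 0 := eulerOp_ne_zero_of_isRoot hp hx
  rw [eulerOp_apply, rootMultiplicity_mul hθ,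
    derivative_rootMultiplicity_of_root hx, rootMultiplicity_eq_zero (by simpa using hx0), zero_add]

theorem le_rootMultiplicity_of_eval_eulerOp_pow_eq_zero (hx0 : x ≠ 0) {k : ℕ} (hp : p ≠ 0)
    (h : ∀ a < k, ((eulerOp R ^ a) p).eval x = 0) : k ≤ p.rootMultiplicity x := by
  induction k generalizing p with
  | zero => exact Nat.zero_le _
  | succ k ih =>
    have hroot : p.IsRoot x := by simpa using h 0 k.succ_pos
    have hθ : k ≤ (eulerOp R p).rootMultiplicity x :=
      ih (eulerOp_ne_zero_of_isRoot hp hroot) fun a ha => by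
        simpa only [pow_succ, Module.End.mul_apply] using h (a + 1) (by omega)
    have hpos := (rootMultiplicity_pos hp).mpr hroot
    rw [rootMultiplicity_eulerOp hx0 hp hroot] at hθ
    omega

end CharZero

section Field

variable {K ι : Type*} [Field K] [CharZero K] [Fintype ι]

theorem prod_X_sub_C_pow_dvd_of_eval_eulerOp_pow_eq_zero {s : ι → K} (hs : Function.Injective s)
    (hs0 : ∀ i, s i ≠ 0) {k : ℕ} {p : K[X]}
    (h : ∀ i, ∀ a < k, ((eulerOp K ^ a) p).eval (s i) = 0) : ∏ i, (X - C (s i)) ^ k ∣ p := by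
  rcases eq_or_ne p 0 with rfl | hp
  · exact dvd_zero _
  refine Finset.prod_dvd_of_coprime (fun i _ j _ hij => ((pairwise_coprime_X_sub_C hs) hij).pow)
    fun i _ => ?_
  exact (le_rootMultiplicity_iff hp).mp
    (le_rootMultiplicity_of_eval_eulerOp_pow_eq_zero (hs0 i) hp (h i))

theorem eq_zero_of_eval_eulerOp_pow_X_pow_mul_eq_zero {s : ι → K} (hs : Function.Injective s)
    (hs0 : ∀ i, s i ≠ 0) {k l : ℕ} {p : K[X]} (hdeg : p.degree < (k * Fintype.card ι : ℕ))
    (h : ∀ i, ∀ a < k, ((eulerOp K ^ a) (X ^ l * p)).eval (s i) = 0) : p = 0 := by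
  have hdvd := prod_X_sub_C_pow_dvd_of_eval_eulerOp_pow_eq_zero hs hs0 h
  have hcop : IsCoprime (∏ i, (X - C (s i)) ^ k) (X ^ l) := by
    refine IsCoprime.prod_left fun i _ => IsCoprime.pow ?_
    simpa using isCoprime_X_sub_C_of_isUnit_sub (sub_ne_zero.mpr (hs0 i)).isUnit
  refine eq_zero_of_dvd_of_degree_lt (hcop.dvd_of_dvd_mul_left hdvd) (hdeg.trans_le ?_)
  rw [degree_prod, Finset.sum_congr rfl fun i _ => by rw [degree_pow, degree_X_sub_C]]
  simp [mul_comm]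

end Field

end Polynomial

namespace Matrix

variable {K ι κ : Type*} [Field K] [Fintype ι] [Fintype κ]

theorem linearIndependent_row_of_mulVec_injective {A : Matrix ι κ K}
    (hcard : Fintype.card ι ≤ Fintype.card κ) (hA : Function.Injective A.mulVec) :
    LinearIndependent K A.row := by
  have hrank : A.rank = Fintype.card κ := by
    have hcols : LinearIndependent K Aᵀ.row := by
      rw [row_transpose]; exact mulVec_injective_iff.mp hA
    rw [← rank_transpose, hcols.rank_matrix]
  rw [linearIndependent_iff_card_eq_finrank_span, Set.finrank, ← rank_eq_finrank_span_row]
  exact le_antisymm (hrank ▸ hcard) (rank_le_card_height A)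

end Matrix

theorem stmt2_general (l k m : ℕ)
    (s : Fin m → ℂ) (hs_inj : Function.Injective s) (hs_ne : ∀ i, s i ≠ 0) :
    LinearIndependent ℂ (fun p : Fin k × Fin m =>
      (fun j : Fin (k * m) =>
        ((l + (j : ℕ) : ℕ) : ℂ) ^ (p.1 : ℕ) * s p.2 ^ (l + (j : ℕ)) :
        Fin (k * m) → ℂ)) := by
  let A : Matrix (Fin k × Fin m) (Fin (k * m)) ℂ := fun p j =>
    ((l + (j : ℕ) : ℕ) : ℂ) ^ (p.1 : ℕ) * s p.2 ^ (l + (j : ℕ))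
  refine Matrix.linearIndependent_row_of_mulVec_injective (A := A) (by simp) ?_
  rw [← Matrix.coe_mulVecLin, injective_iff_map_eq_zero]
  intro d hd
  let p := (degreeLTEquiv ℂ (k * m)).symm d
  have hp : (p : ℂ[X]) = 0 := by
    refine eq_zero_of_eval_eulerOp_pow_X_pow_mul_eq_zero (l := l) hs_inj hs_ne
      (by simpa using mem_degreeLT.mp p.2) fun i a ha => ?_
    -- `(p : ℂ[X])` unfolds to `∑ j, monomial j (d j)`.
    exact (eval_eulerOp_pow_X_pow_mul_sum_monomial a l d (s i)).trans (congrFun hd (⟨a, ha⟩, i))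
  exact (degreeLTEquiv ℂ _).symm.map_eq_zero_iff.mp (Subtype.ext hp)

/-- For `k ≤ l` and distinct nonzero `s₁,…,s_m ∈ ℂ`, the vectors
`w_a(s_i) ∈ ℂ^{km}` with entries `(w_a(s))_j = (l+j)^a·s^{l+j}` (for
`a = 0,…,k−1`, `j = 0,…,km−1`) are linearly independent. -/
theorem stmt2 (l k m : ℕ) (hl : 0 < l) (hk : 0 < k) (hm : 0 < m) (hkl : k ≤ l)
    (s : Fin m → ℂ) (hs_inj : Function.Injective s) (hs_ne : ∀ i, s i ≠ 0) :
    LinearIndependent ℂ (fun p : Fin k × Fin m =>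
      (fun j : Fin (k * m) =>
        ((l + (j : ℕ) : ℕ) : ℂ) ^ (p.1 : ℕ) * s p.2 ^ (l + (j : ℕ)) :
        Fin (k * m) → ℂ)) :=
  stmt2_general l k m s hs_inj hs_ne
end

section
/- Let T : M_k(ℂ) → M_k(ℂ) be a positive linear map, let v₁,…,v_n ∈ M_k(ℂ) be matrices with Σ_μ v_μ* ρ v_μ = ρ for a positive semidefinite matrix ρ (i.e., ρ is invariant for the adjoint of the CP map A ↦ Σ v_μ A v_μ*). Then for every vector ξ in the kernel of ρ, every vector η in the range of ρ, every l ∈ ℕ, and every word v_{μ₁}⋯v_{μ_l} in the matrices v_μ, one has ⟨η, v_{μ₁}⋯v_{μ_l} ξ⟩ = 0. -/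
/-!
Evaluating `Σ_μ v_μ* ρ v_μ = ρ` on a kernel vector `ξ` of `ρ` gives
`Σ_μ ⟨v_μ ξ, ρ v_μ ξ⟩ = 0`, a sum of nonnegative terms, so each `v_μ ξ` lies in the kernel of the
positive semidefinite `ρ`. Hence the kernel of `ρ` is invariant under every word in the `v_μ`, and it
is orthogonal to the range of the Hermitian `ρ`.
-/

open scoped ComplexOrder Matrix

namespace Matrix

variable {m ι 𝕜 : Type*} [Fintype m] [RCLike 𝕜]

theorem dotProduct_conjTranspose_mul_mul_mulVec (ρ V : Matrix m m 𝕜) (ξ : m → 𝕜) :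
    star ξ ⬝ᵥ (Vᴴ * ρ * V) *ᵥ ξ = star (V *ᵥ ξ) ⬝ᵥ ρ *ᵥ (V *ᵥ ξ) := by
  simp only [star_mulVec, dotProduct_mulVec, vecMul_vecMul, Matrix.mul_assoc]

theorem PosSemidef.mulVec_mulVec_eq_zero_of_sum_conjTranspose_mul_mul_eq [Fintype ι]
    {ρ : Matrix m m 𝕜} (hρ : ρ.PosSemidef) {v : ι → Matrix m m 𝕜}
    (hinv : ∑ μ, (v μ)ᴴ * ρ * v μ = ρ) {ξ : m → 𝕜} (hξ : ρ *ᵥ ξ = 0) (μ : ι) :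
    ρ *ᵥ (v μ *ᵥ ξ) = 0 := by
  have hsum : ∑ ν, star (v ν *ᵥ ξ) ⬝ᵥ ρ *ᵥ (v ν *ᵥ ξ) = 0 := by
    simp_rw [← dotProduct_conjTranspose_mul_mul_mulVec, ← dotProduct_sum, ← sum_mulVec, hinv,
      hξ, dotProduct_zero]
  have hterm := (Finset.sum_eq_zero_iff_of_nonneg fun ν _ =>
    hρ.dotProduct_mulVec_nonneg (v ν *ᵥ ξ)).mp hsum μ (Finset.mem_univ μ)
  exact (hρ.dotProduct_mulVec_zero_iff _).mp hterm

theorem mulVec_list_prod_mulVec_eq_zero {R : Type*} [Semiring R] [DecidableEq m]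
    {ρ : Matrix m m R} {L : List (Matrix m m R)}
    (hL : ∀ A ∈ L, ∀ x, ρ *ᵥ x = 0 → ρ *ᵥ (A *ᵥ x) = 0) {ξ : m → R} (hξ : ρ *ᵥ ξ = 0) :
    ρ *ᵥ (L.prod *ᵥ ξ) = 0 := by
  induction L with
  | nil => simpa using hξ
  | cons A L ih =>
    rw [List.prod_cons, ← mulVec_mulVec]
    exact hL A List.mem_cons_self _ (ih fun B hB => hL B (List.mem_cons_of_mem A hB))

theorem IsHermitian.star_mulVec_dotProduct_eq_zero {ρ : Matrix m m 𝕜} (hρ : ρ.IsHermitian)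
    (ζ : m → 𝕜) {x : m → 𝕜} (hx : ρ *ᵥ x = 0) : star (ρ *ᵥ ζ) ⬝ᵥ x = 0 := by
  rw [star_mulVec, hρ.eq, ← dotProduct_mulVec, hx, dotProduct_zero]

end Matrix

theorem stmt3_general (k n : ℕ)
    (v : Fin n → Matrix (Fin k) (Fin k) ℂ)
    (ρ : Matrix (Fin k) (Fin k) ℂ) (hρ : ρ.PosSemidef)
    (hinv : ∑ μ, (v μ)ᴴ * ρ * v μ = ρ) :
    ∀ ξ : Fin k → ℂ, ρ.mulVec ξ = 0 →
    ∀ η : Fin k → ℂ, (∃ ζ : Fin k → ℂ, η = ρ.mulVec ζ) →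
    ∀ (l : ℕ) (μs : Fin l → Fin n),
      dotProduct (star η) (((List.ofFn fun i => v (μs i)).prod).mulVec ξ) = 0 := by
  rintro ξ hξ _ ⟨ζ, rfl⟩ l μs
  have hword : ρ *ᵥ ((List.ofFn fun i => v (μs i)).prod *ᵥ ξ) = 0 := by
    refine Matrix.mulVec_list_prod_mulVec_eq_zero (fun A hA x hx => ?_) hξ
    obtain ⟨i, rfl⟩ := List.mem_ofFn.mp hA
    exact hρ.mulVec_mulVec_eq_zero_of_sum_conjTranspose_mul_mul_eq hinv hx (μs i)
  exact hρ.isHermitian.star_mulVec_dotProduct_eq_zero ζ hword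

/-- If `ρ` is positive semidefinite with `Σ_μ v_μ* ρ v_μ = ρ`, then
for every `ξ` in the kernel of `ρ`, every `η` in the range of `ρ`, and every word
`v_{μ₁}⋯v_{μ_l}`, one has `⟨η, v_{μ₁}⋯v_{μ_l} ξ⟩ = 0`. -/
theorem stmt3 (k n : ℕ) (hk : 0 < k) (hn : 0 < n)
    (v : Fin n → Matrix (Fin k) (Fin k) ℂ)
    (ρ : Matrix (Fin k) (Fin k) ℂ) (hρ : ρ.PosSemidef)
    (hinv : ∑ μ, (v μ)ᴴ * ρ * v μ = ρ) :
    ∀ ξ : Fin k → ℂ, ρ.mulVec ξ = 0 →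
    ∀ η : Fin k → ℂ, (∃ ζ : Fin k → ℂ, η = ρ.mulVec ζ) →
    ∀ (l : ℕ) (μs : Fin l → Fin n),
      dotProduct (star η) (((List.ofFn fun i => v (μs i)).prod).mulVec ξ) = 0 :=
  stmt3_general k n v ρ hρ hinv
end

section
/- Let 𝐯 = (v₁,…,v_n) ∈ M_k(ℂ)^n and suppose there exists m₂ ∈ ℕ and an invertible matrix X ∈ 𝒦_{m₂}(𝐯) (the span of words of length m₂) such that X^{-1} 𝒦_{N+m₂}(𝐯) ⊆ 𝒦_N(𝐯) for all N ≥ m₃. Then for all N ≥ m₃, (X^{-1})* (ker Γ_N) ⊆ ker Γ_{N+m₂}, where Γ_l : M_k(ℂ) → (ℂ^n)^{⊗l} is the matrix-product map Γ_l(Y) = Σ_{μ^{(l)}} Tr(Y (v_{μ₁}⋯v_{μ_l})*) ψ_{μ₁}⊗⋯⊗ψ_{μ_l}. -/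
/-!
`Γ_N(Y) = 0` says that `Y` is orthogonal to `𝒦_N(𝐯)` for the trace pairing `⟨Y, Z⟩ = Tr(Y Z*)`.
Since `⟨(X⁻¹)* Y, w⟩ = ⟨Y, X⁻¹ w⟩` and `X⁻¹ w ∈ 𝒦_N(𝐯)` for every word `w` of length `N + m₂`,
`(X⁻¹)* Y` is then orthogonal to all such words.
-/

open scoped Matrix

/-- The word `v_{μ₁}⋯v_{μ_l}` associated to `μ ∈ {1,…,n}^l`. -/
noncomputable def mpsWord {k n : ℕ} (v : Fin n → Matrix (Fin k) (Fin k) ℂ)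
    {l : ℕ} (μs : Fin l → Fin n) : Matrix (Fin k) (Fin k) ℂ :=
  (List.ofFn fun i => v (μs i)).prod

/-- `𝒦_l(𝐯)`: the span of all words of length `l`. -/
noncomputable def mpsSpan {k n : ℕ} (v : Fin n → Matrix (Fin k) (Fin k) ℂ)
    (l : ℕ) : Submodule ℂ (Matrix (Fin k) (Fin k) ℂ) :=
  Submodule.span ℂ (Set.range fun μs : Fin l → Fin n => mpsWord v μs)

/-- The matrix-product map `Γ_l` in the coordinates of the fixed orthonormal
basis `ψ_{μ₁}⊗⋯⊗ψ_{μ_l}` of `(ℂ^n)^{⊗l}`: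
`Γ_l(Y)_{μ^{(l)}} = Tr(Y (v_{μ₁}⋯v_{μ_l})*)`. -/
noncomputable def mpsGamma {k n : ℕ} (v : Fin n → Matrix (Fin k) (Fin k) ℂ)
    (l : ℕ) (Y : Matrix (Fin k) (Fin k) ℂ) : (Fin l → Fin n) → ℂ :=
  fun μs => (Y * (mpsWord v μs)ᴴ).trace

namespace Matrix

variable {ι R : Type*} [Fintype ι] [CommSemiring R] [StarRing R]

theorem trace_conjTranspose_mul_mul_conjTranspose (A Y W : Matrix ι ι R) :
    (Aᴴ * Y * Wᴴ).trace = (Y * (A * W)ᴴ).trace := by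
  rw [conjTranspose_mul, Matrix.mul_assoc, trace_mul_comm, ← Matrix.mul_assoc]

theorem trace_mul_conjTranspose_eq_zero_of_mem_span {Y Z : Matrix ι ι R}
    {S : Set (Matrix ι ι R)} (hS : ∀ W ∈ S, (Y * Wᴴ).trace = 0)
    (hZ : Z ∈ Submodule.span R S) : (Y * Zᴴ).trace = 0 := by
  induction hZ using Submodule.span_induction with
  | mem W hW => exact hS W hW
  | zero => simp
  | add W₁ W₂ _ _ h₁ h₂ => simp [Matrix.mul_add, h₁, h₂]
  | smul c W _ hW => simp [hW]

end Matrix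

theorem mpsGamma_eq_zero_iff {k n : ℕ} (v : Fin n → Matrix (Fin k) (Fin k) ℂ) (N : ℕ)
    (Y : Matrix (Fin k) (Fin k) ℂ) :
    mpsGamma v N Y = 0 ↔ ∀ Z ∈ mpsSpan v N, (Y * Zᴴ).trace = 0 := by
  refine ⟨fun hY _ hZ => Matrix.trace_mul_conjTranspose_eq_zero_of_mem_span ?_ hZ,
    fun hY => funext fun μs => hY _ (Submodule.subset_span ⟨μs, rfl⟩)⟩
  rintro _ ⟨μs, rfl⟩
  exact congrFun hY μs

theorem stmt5_general (k n m₂ m₃ : ℕ)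
    (v : Fin n → Matrix (Fin k) (Fin k) ℂ)
    (X : Matrix (Fin k) (Fin k) ℂ)
    (hXK : ∀ N, m₃ ≤ N → ∀ Z ∈ mpsSpan v (N + m₂), X⁻¹ * Z ∈ mpsSpan v N) :
    ∀ N, m₃ ≤ N → ∀ Y : Matrix (Fin k) (Fin k) ℂ,
      mpsGamma v N Y = 0 → mpsGamma v (N + m₂) ((X⁻¹)ᴴ * Y) = 0 := by
  intro N hN Y hY
  rw [mpsGamma_eq_zero_iff] at hY ⊢
  intro Z hZ
  rw [Matrix.trace_conjTranspose_mul_mul_conjTranspose]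
  exact hY _ (hXK N hN Z hZ)

/-- If `X ∈ 𝒦_{m₂}(𝐯)` is invertible with
`X⁻¹𝒦_{N+m₂}(𝐯) ⊆ 𝒦_N(𝐯)` for all `N ≥ m₃`, then
`(X⁻¹)* (ker Γ_N) ⊆ ker Γ_{N+m₂}` for all `N ≥ m₃`. -/
theorem stmt5 (k n m₂ m₃ : ℕ) (hk : 0 < k) (hn : 0 < n)
    (v : Fin n → Matrix (Fin k) (Fin k) ℂ)
    (X : Matrix (Fin k) (Fin k) ℂ)
    (hXmem : X ∈ mpsSpan v m₂) (hXunit : IsUnit X)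
    (hXK : ∀ N, m₃ ≤ N → ∀ Z ∈ mpsSpan v (N + m₂), X⁻¹ * Z ∈ mpsSpan v N) :
    ∀ N, m₃ ≤ N → ∀ Y : Matrix (Fin k) (Fin k) ℂ,
      mpsGamma v N Y = 0 → mpsGamma v (N + m₂) ((X⁻¹)ᴴ * Y) = 0 :=
  stmt5_general k n m₂ m₃ v X hXK
end

section
/- Let S, T : M_k(ℂ) → M_k(ℂ) be linear maps such that T(X) = Σ_μ B_μ' X (B_μ')* where B_μ' = ω_μ ⊗ Λ with Λ diagonal, and S(X) = Σ_μ B_μ X B_μ* where B_μ − B_μ' ∈ M_{n₀}(ℂ) ⊗ N for the nilpotent algebra N of strictly upper-triangular matrices. Then σ(S) ⊆ σ(T); in particular the spectral radii satisfy r_S ≤ r_T. -/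
open scoped Matrix Kronecker

/-- Let `T(X) = Σ_μ B'_μ X (B'_μ)*` with `B'_μ = ω_μ ⊗ Λ`
(`Λ` diagonal), and `S(X) = Σ_μ B_μ X B_μ*` with `B_μ − B'_μ` valued in
`M_{n₀}(ℂ) ⊗ N` for `N` the strictly upper-triangular matrices.  Then
`σ(S) ⊆ σ(T)`; in particular `r_S ≤ r_T`. -/
theorem stmt13 (n n₀ d : ℕ) (hn : 0 < n) (hn₀ : 0 < n₀) (hd : 0 < d)
    (ω : Fin n → Matrix (Fin n₀) (Fin n₀) ℂ)
    (Λ : Matrix (Fin d) (Fin d) ℂ)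
    (hΛdiag : ∀ i j : Fin d, i ≠ j → Λ i j = 0)
    (B : Fin n → Matrix (Fin n₀ × Fin d) (Fin n₀ × Fin d) ℂ)
    (hBnil : ∀ (μ : Fin n) (α β : Fin n₀) (i j : Fin d), ¬ i < j →
      (B μ - (ω μ) ⊗ₖ Λ) (α, i) (β, j) = 0)
    (S T : Module.End ℂ (Matrix (Fin n₀ × Fin d) (Fin n₀ × Fin d) ℂ))
    (hS : ∀ X, S X = ∑ μ, B μ * X * (B μ)ᴴ)
    (hT : ∀ X, T X = ∑ μ, ((ω μ) ⊗ₖ Λ) * X * ((ω μ) ⊗ₖ Λ)ᴴ) :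
    spectrum ℂ S ⊆ spectrum ℂ T := by
  classical
  intro z hz
  rw [← Module.End.hasEigenvalue_iff_mem_spectrum] at hz ⊢
  obtain ⟨X, hXmem, hXne⟩ := hz.exists_hasEigenvector
  have hSX : S X = z • X := Module.End.mem_eigenspace_iff.mp hXmem
  -- `B` agrees with `ω ⊗ₖ Λ` below the strict upper triangle
  have hB : ∀ (μ : Fin n) (α γ : Fin n₀) (i k : Fin d), ¬ i < k →
      B μ (α, i) (γ, k) = ω μ α γ * Λ i k := by
    intro μ α γ i k h
    have h1 := hBnil μ α γ i k h
    rw [Matrix.sub_apply, sub_eq_zero] at h1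
    simpa [Matrix.kroneckerMap_apply] using h1
  -- `T` only looks at entries with the same `(i, j)` pair
  have hTloc : ∀ (W₁ W₂ : Matrix (Fin n₀ × Fin d) (Fin n₀ × Fin d) ℂ)
      (α β : Fin n₀) (i j : Fin d),
      (∀ γ δ, W₁ (γ, i) (δ, j) = W₂ (γ, i) (δ, j)) →
      T W₁ (α, i) (β, j) = T W₂ (α, i) (β, j) := by
    intro W₁ W₂ α β i j hW
    rw [hT, hT, Matrix.sum_apply, Matrix.sum_apply]
    refine Finset.sum_congr rfl fun μ _ => ?_
    simp only [Matrix.mul_apply, Matrix.conjTranspose_apply, Finset.sum_mul]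
    refine Finset.sum_congr rfl fun q _ => Finset.sum_congr rfl fun p _ => ?_
    obtain ⟨δ, l⟩ := q; obtain ⟨γ, k⟩ := p
    by_cases hk : k = i
    · by_cases hl : l = j
      · subst hk; subst hl; rw [hW γ δ]
      · simp [Matrix.kroneckerMap_apply, hΛdiag j l (Ne.symm hl)]
    · simp [Matrix.kroneckerMap_apply, hΛdiag i k (Ne.symm hk)]
  -- On entries of maximal degree, `S` and `T` agree
  have hST : ∀ (α β : Fin n₀) (i j : Fin d),
      (∀ (γ δ : Fin n₀) (k l : Fin d), (i : ℕ) + (j : ℕ) < (k : ℕ) + (l : ℕ) →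
        X (γ, k) (δ, l) = 0) →
      S X (α, i) (β, j) = T X (α, i) (β, j) := by
    intro α β i j hX0
    rw [hS, hT, Matrix.sum_apply, Matrix.sum_apply]
    refine Finset.sum_congr rfl fun μ _ => ?_
    simp only [Matrix.mul_apply, Matrix.conjTranspose_apply, Finset.sum_mul]
    refine Finset.sum_congr rfl fun q _ => Finset.sum_congr rfl fun p _ => ?_
    obtain ⟨δ, l⟩ := q; obtain ⟨γ, k⟩ := p
    by_cases hik : i < k
    · by_cases hjl : j < l
      · -- both strictly raised: the `X` entry vanishes
        rw [hX0 γ δ k l (by omega)]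
        ring
      · rw [hB μ β δ j l hjl]
        by_cases hlj : l = j
        · subst hlj
          rw [hX0 γ δ k l (by omega)]
          ring
        · simp [Matrix.kroneckerMap_apply, hΛdiag j l (Ne.symm hlj)]
    · rw [hB μ α γ i k hik]
      by_cases hjl : j < l
      · by_cases hki : k = i
        · subst hki
          rw [hX0 γ δ k l (by omega)]
          ring
        · simp [Matrix.kroneckerMap_apply, hΛdiag i k (Ne.symm hki)]
      · rw [hB μ β δ j l hjl]
        simp [Matrix.kroneckerMap_apply]
  -- maximal degree of a nonzero entry of `X`
  have hex : ∃ t : (Fin n₀ × Fin d) × (Fin n₀ × Fin d), X t.1 t.2 ≠ 0 := by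
    by_contra h
    push_neg at h
    exact hXne (by ext p q; simpa using h (p, q))
  set s : Finset ((Fin n₀ × Fin d) × (Fin n₀ × Fin d)) :=
    Finset.univ.filter (fun t => X t.1 t.2 ≠ 0) with hsdef
  have hs : s.Nonempty := by
    obtain ⟨t, ht⟩ := hex
    exact ⟨t, by simp [hsdef, ht]⟩
  set dg : ((Fin n₀ × Fin d) × (Fin n₀ × Fin d)) → ℕ :=
    fun t => (t.1.2 : ℕ) + (t.2.2 : ℕ) with hdg
  set m := s.sup dg with hm
  obtain ⟨t₀, ht₀s, ht₀⟩ := Finset.exists_mem_eq_sup s hs dg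
  have hgt : ∀ (γ δ : Fin n₀) (k l : Fin d), m < (k : ℕ) + (l : ℕ) →
      X (γ, k) (δ, l) = 0 := by
    intro γ δ k l h
    by_contra hne
    have : dg ((γ, k), (δ, l)) ≤ m :=
      Finset.le_sup (by simp [hsdef, hne])
    simp only [hdg] at this
    omega
  -- the top graded component of `X`
  set Y : Matrix (Fin n₀ × Fin d) (Fin n₀ × Fin d) ℂ :=
    Matrix.of (fun p q => if (p.2 : ℕ) + (q.2 : ℕ) = m then X p q else 0) with hY
  have hYne : Y ≠ 0 := by
    intro h
    obtain ⟨⟨γ, k⟩, ⟨δ, l⟩⟩ := t₀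
    have hX0 : X (γ, k) (δ, l) ≠ 0 := by simpa [hsdef] using ht₀s
    have hdeg : (k : ℕ) + (l : ℕ) = m := by
      simp only [hdg] at ht₀; exact ht₀.symm
    have hYX : Y (γ, k) (δ, l) = X (γ, k) (δ, l) := by simp [hY, hdeg]
    rw [h] at hYX
    exact hX0 (by simpa using hYX.symm)
  refine Module.End.hasEigenvalue_of_hasEigenvector
    ⟨Module.End.mem_eigenspace_iff.mpr ?_, hYne⟩
  ext ⟨α, i⟩ ⟨β, j⟩
  by_cases hij : (i : ℕ) + (j : ℕ) = m
  · have h1 : T Y (α, i) (β, j) = T X (α, i) (β, j) :=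
      hTloc Y X α β i j (fun γ δ => by simp [hY, hij])
    have h2 : S X (α, i) (β, j) = T X (α, i) (β, j) :=
      hST α β i j (fun γ δ k l h => hgt γ δ k l (by omega))
    have h3 : S X (α, i) (β, j) = z * X (α, i) (β, j) := by
      rw [hSX]; simp
    have h4 : (z • Y) (α, i) (β, j) = z * X (α, i) (β, j) := by
      simp [hY, hij]
    rw [h1, ← h2, h3, h4]
  · have h1 : T Y (α, i) (β, j) = T 0 (α, i) (β, j) :=
      hTloc Y 0 α β i j (fun γ δ => by simp [hY, hij])
    rw [h1, map_zero]
    simp [hY, hij]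
end

section
/- Let T : M_k(ℂ) → M_k(ℂ) be a positive linear map. Then the following are equivalent: (1) there is no nontrivial orthogonal projection P with T(P M_k(ℂ) P) ⊆ P M_k(ℂ) P; (2) for every nonzero positive semidefinite A and every t > 0, the matrix exp(tT)(A) := Σ_{m≥0} (t^m/m!) T^m(A) is positive definite. -/
open scoped Matrix ComplexOrder

/-!
(1) ⇒ (2). `S = exp(tT)(A)` is positive semidefinite, and for `t > 0` its kernel is the common
kernel of all `Tᵐ(A)`, so `ker S ⊆ ker T(S)`. If `ker S ≠ 0`, the support projection `P` of `S` is
a nontrivial projection with invariant corner: a positive `X = P X P` has `ker S ⊆ ker X`, hence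
`X ≤ c S` in finite dimension, so `T(X) ≤ c T(S)` and `ker P = ker S ⊆ ker T(X)`. Positive matrices
span `M_k(ℂ)`, so the whole corner `P M_k(ℂ) P` is mapped into itself.

(2) ⇒ (1). For an invariant projection `P ≠ 1`, every `Tᵐ(P)` lies in `P M_k(ℂ) P`, so
`exp(T)(P)` vanishes on `ker P ≠ 0`.
-/

section

open scoped Matrix.Norms.L2Operator MatrixOrder

lemma pow_apply_nonneg {E : Type*} [AddCommGroup E] [Module ℂ E] [Preorder E]
    {T : Module.End ℂ E} (hT : ∀ v, 0 ≤ v → 0 ≤ T v) {v : E} (hv : 0 ≤ v) (m : ℕ) :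
    0 ≤ (T ^ m) v := by
  induction m with
  | zero => exact hv
  | succ m ih => rw [pow_succ', Module.End.mul_apply]; exact hT _ ih

noncomputable def expApply {E : Type*} [AddCommGroup E] [Module ℂ E] [TopologicalSpace E]
    (T : Module.End ℂ E) (t : ℝ) (v : E) : E :=
  ∑' m : ℕ, ((t ^ m / m.factorial : ℝ) : ℂ) • (T ^ m) v

section ExpApply

variable {E : Type*} [NormedAddCommGroup E] [NormedSpace ℂ E] [FiniteDimensional ℂ E]

lemma summable_expApply_term (T : Module.End ℂ E) (t : ℝ) (v : E) :
    Summable fun m : ℕ => ((t ^ m / m.factorial : ℝ) : ℂ) • (T ^ m) v := by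
  let L : E →L[ℂ] E := LinearMap.toContinuousLinearMap T
  have h := (NormedSpace.expSeries_summable' (𝕂 := ℂ) ((t : ℂ) • L)).map
    (ContinuousLinearMap.apply ℂ E v) (ContinuousLinearMap.apply ℂ E v).continuous
  convert h using 2 with m
  have hL : (L ^ m) v = (T ^ m) v := by
    rw [← ContinuousLinearMap.coe_coe, ContinuousLinearMap.toLinearMap_pow]
    rfl
  rw [Function.comp_apply, ContinuousLinearMap.apply_apply, smul_pow, smul_apply, smul_apply, hL,
    smul_smul, Complex.ofReal_div, Complex.ofReal_pow, Complex.ofReal_natCast, div_eq_inv_mul]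

lemma map_expApply (T : Module.End ℂ E) (t : ℝ) (v : E) :
    T (expApply T t v) = expApply T t (T v) := by
  rw [expApply, (summable_expApply_term T t v).map_tsum T
    (LinearMap.continuous_of_finiteDimensional T), expApply]
  simp_rw [map_smul, ← Module.End.mul_apply, (Commute.self_pow T _).eq]

end ExpApply

namespace Matrix

variable {n : Type*} [Fintype n]

lemma mulVec_eq_zero_of_le {M N : Matrix n n ℂ} (hM : 0 ≤ M) (hMN : M ≤ N) {y : n → ℂ}
    (hy : N *ᵥ y = 0) : M *ᵥ y = 0 := by
  rw [nonneg_iff_posSemidef] at hM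
  rw [le_iff] at hMN
  rw [← hM.dotProduct_mulVec_zero_iff]
  have hsum : star y ⬝ᵥ M *ᵥ y + star y ⬝ᵥ (N - M) *ᵥ y = 0 := by
    rw [← dotProduct_add, ← add_mulVec, add_sub_cancel, hy, dotProduct_zero]
  exact ((add_eq_zero_iff_of_nonneg (hM.dotProduct_mulVec_nonneg y)
    (hMN.dotProduct_mulVec_nonneg y)).mp hsum).1

variable {ι : Type*} {f : ι → Matrix n n ℂ}

lemma tsum_mulVec (hf : Summable f) (y : n → ℂ) : (∑' i, f i) *ᵥ y = ∑' i, f i *ᵥ y :=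
  hf.map_tsum (AddMonoidHom.mk' (· *ᵥ y) fun A B => add_mulVec A B y)
    (continuous_id.matrix_mulVec continuous_const)

variable [DecidableEq n]

lemma tsum_mulVec_eq_zero_iff (hf : Summable f) (h : ∀ i, 0 ≤ f i) {y : n → ℂ} :
    (∑' i, f i) *ᵥ y = 0 ↔ ∀ i, f i *ᵥ y = 0 := by
  refine ⟨fun hy i => mulVec_eq_zero_of_le (h i) (hf.le_tsum i fun j _ => h j) hy, fun hy => ?_⟩
  simp [tsum_mulVec hf, hy]

lemma PosSemidef.posDef_iff_mulVec_eq_zero {M : Matrix n n ℂ} (hM : M.PosSemidef) :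
    M.PosDef ↔ ∀ x, M *ᵥ x = 0 → x = 0 := by
  rw [hM.posDef_iff_isUnit, ← mulVec_injective_iff_isUnit, ← coe_mulVecLin,
    injective_iff_map_eq_zero]

lemma exists_mulVec_eq_zero_of_ne_one {P : Matrix n n ℂ} (hP : P * P = P) (hP1 : P ≠ 1) :
    ∃ y, y ≠ 0 ∧ P *ᵥ y = 0 := by
  by_contra! h
  refine hP1 (ext_of_mulVec_single fun i => ?_)
  have hker : P *ᵥ (Pi.single i 1 - P *ᵥ Pi.single i 1) = 0 := by
    rw [mulVec_sub, mulVec_mulVec, hP, sub_self]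
  rw [one_mulVec, eq_comm, ← sub_eq_zero]
  by_contra hne
  exact h _ hne hker

lemma continuousOn_spectrum (N : Matrix n n ℂ) (f : ℝ → ℝ) : ContinuousOn f (spectrum ℝ N) :=
  N.finite_real_spectrum.continuousOn f

lemma cfc_mul_cfc (N : Matrix n n ℂ) (f g : ℝ → ℝ) :
    cfc f N * cfc g N = cfc (fun x => f x * g x) N :=
  (cfc_mul f g N (N.continuousOn_spectrum f) (N.continuousOn_spectrum g)).symm

noncomputable def supportProj (N : Matrix n n ℂ) : Matrix n n ℂ :=
  cfc (fun x : ℝ => if x = 0 then 0 else 1) N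

lemma isSelfAdjoint_supportProj (N : Matrix n n ℂ) : IsSelfAdjoint (supportProj N) :=
  cfc_predicate _ _

lemma supportProj_mul_self (N : Matrix n n ℂ) : supportProj N * supportProj N = supportProj N := by
  rw [supportProj, cfc_mul_cfc]
  congr 1
  ext x
  split_ifs <;> simp

lemma mul_supportProj {N : Matrix n n ℂ} (hN : IsSelfAdjoint N) : N * supportProj N = N := by
  calc N * supportProj N = cfc (fun x : ℝ => x) N * supportProj N := by rw [cfc_id' ℝ N]
    _ = cfc (fun x : ℝ => x) N := by
      rw [supportProj, cfc_mul_cfc]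
      congr 1
      ext x
      split_ifs <;> simp_all
    _ = N := cfc_id' ℝ N

lemma supportProj_mulVec_eq_zero_iff {N : Matrix n n ℂ} (hN : IsSelfAdjoint N) {y : n → ℂ} :
    supportProj N *ᵥ y = 0 ↔ N *ᵥ y = 0 := by
  -- `x⁻¹ * x` is the indicator of `x ≠ 0`, because `0⁻¹ = 0`
  have hinv : cfc (fun x : ℝ => x⁻¹) N * N = supportProj N := by
    calc cfc (fun x : ℝ => x⁻¹) N * N = cfc (fun x : ℝ => x⁻¹) N * cfc (fun x : ℝ => x) N := by
          rw [cfc_id' ℝ N]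
      _ = supportProj N := by
          rw [supportProj, cfc_mul_cfc]
          congr 1
          ext x
          split_ifs <;> simp_all
  constructor
  · intro hy
    rw [← mul_supportProj hN, ← mulVec_mulVec, hy, mulVec_zero]
  · intro hy
    rw [← hinv, ← mulVec_mulVec, hy, mulVec_zero]

lemma exists_supportProj_le_smul {N : Matrix n n ℂ} (hN : 0 ≤ N) :
    ∃ c : ℝ, supportProj N ≤ c • N := by
  have hfin := N.finite_real_spectrum
  have hspec : ∀ x ∈ spectrum ℝ N, 0 ≤ x := fun x hx => spectrum_nonneg_of_nonneg hN hx
  refine ⟨∑ x ∈ hfin.toFinset, x⁻¹, ?_⟩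
  rw [supportProj, ← cfc_const_mul_id (∑ x ∈ hfin.toFinset, x⁻¹) N]
  refine cfc_mono (fun x hx => ?_) (N.continuousOn_spectrum _) (N.continuousOn_spectrum _)
  split_ifs with hx0
  · simp [hx0]
  · have hle : x⁻¹ ≤ ∑ x ∈ hfin.toFinset, x⁻¹ :=
      Finset.single_le_sum (f := fun x : ℝ => x⁻¹)
        (fun y hy => inv_nonneg.mpr (hspec y (hfin.mem_toFinset.mp hy))) (hfin.mem_toFinset.mpr hx)
    calc (1 : ℝ) = x⁻¹ * x := (inv_mul_cancel₀ hx0).symm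
      _ ≤ _ := mul_le_mul_of_nonneg_right hle (hspec x hx)

lemma mul_supportProj_of_ker_le {M N : Matrix n n ℂ} (hN : IsSelfAdjoint N)
    (h : ∀ y, N *ᵥ y = 0 → M *ᵥ y = 0) : M * supportProj N = M := by
  refine ext_of_mulVec_single fun i => ?_
  have hker : N *ᵥ (Pi.single i 1 - supportProj N *ᵥ Pi.single i 1) = 0 := by
    rw [mulVec_sub, mulVec_mulVec, mul_supportProj hN, sub_self]
  rw [← mulVec_mulVec, eq_comm, ← sub_eq_zero, ← mulVec_sub]
  exact h _ hker

lemma supportProj_mul_mul_supportProj_of_ker_le {M N : Matrix n n ℂ} (hN : IsSelfAdjoint N)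
    (hM : IsSelfAdjoint M) (h : ∀ y, N *ᵥ y = 0 → M *ᵥ y = 0) :
    supportProj N * M * supportProj N = M := by
  have hMP := mul_supportProj_of_ker_le hN h
  have hPM : supportProj N * M = M := by
    simpa [hM.star_eq, (isSelfAdjoint_supportProj N).star_eq] using congrArg star hMP
  rw [hPM, hMP]

lemma exists_le_smul_of_ker_le {M N : Matrix n n ℂ} (hM : 0 ≤ M) (hN : 0 ≤ N)
    (h : ∀ y, N *ᵥ y = 0 → M *ᵥ y = 0) : ∃ c : ℝ, M ≤ c • N := by
  obtain ⟨c, hc⟩ := exists_supportProj_le_smul hN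
  have hP := isSelfAdjoint_supportProj N
  refine ⟨‖M‖ * c, ?_⟩
  calc M = star (supportProj N) * M * supportProj N := by
        rw [hP.star_eq, supportProj_mul_mul_supportProj_of_ker_le hN.isSelfAdjoint
          hM.isSelfAdjoint h]
    _ ≤ ‖M‖ • (star (supportProj N) * supportProj N) :=
        CStarAlgebra.star_left_conjugate_le_norm_smul hM.isSelfAdjoint
    _ = ‖M‖ • supportProj N := by rw [hP.star_eq, supportProj_mul_self]
    _ ≤ ‖M‖ • (c • N) := smul_le_smul_of_nonneg_left hc (norm_nonneg M)
    _ = (‖M‖ * c) • N := (mul_smul _ _ _).symm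

end Matrix

section MatrixPositiveMap

open Matrix

variable {n : Type*} [Fintype n] {T : Module.End ℂ (Matrix n n ℂ)}

lemma pow_apply_corner {P : Matrix n n ℂ} (hP : P * P = P)
    (hinv : ∀ X, T (P * X * P) = P * T (P * X * P) * P) (m : ℕ) :
    (T ^ m) P = P * (T ^ m) P * P := by
  induction m with
  | zero => simp [hP]
  | succ m ih => rw [pow_succ', Module.End.mul_apply, ih, ← hinv]

variable [DecidableEq n]

lemma corner_invariant_of_nonneg (T : Module.End ℂ (Matrix n n ℂ)) (P : Matrix n n ℂ)
    (h : ∀ M, 0 ≤ M → T (P * M * P) = P * T (P * M * P) * P) (X : Matrix n n ℂ) :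
    T (P * X * P) = P * T (P * X * P) * P := by
  let corner : Module.End ℂ (Matrix n n ℂ) := LinearMap.mulRight ℂ P ∘ₗ LinearMap.mulLeft ℂ P
  have hspan : T ∘ₗ corner = corner ∘ₗ T ∘ₗ corner :=
    LinearMap.ext_on CStarAlgebra.span_nonneg fun M hM => h M hM
  exact LinearMap.congr_fun hspan X

lemma corner_invariant_supportProj (hT : ∀ M, 0 ≤ M → 0 ≤ T M) {S : Matrix n n ℂ} (hS : 0 ≤ S)
    (hTS : ∀ y, S *ᵥ y = 0 → T S *ᵥ y = 0) (X : Matrix n n ℂ) :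
    T (supportProj S * X * supportProj S) =
      supportProj S * T (supportProj S * X * supportProj S) * supportProj S := by
  set P := supportProj S
  refine corner_invariant_of_nonneg T P (fun M hM => ?_) X
  have hPMP : 0 ≤ P * M * P := (isSelfAdjoint_supportProj S).conjugate_nonneg hM
  have hker : ∀ y, S *ᵥ y = 0 → (P * M * P) *ᵥ y = 0 := fun y hy => by
    rw [← mulVec_mulVec, (supportProj_mulVec_eq_zero_iff hS.isSelfAdjoint).mpr hy, mulVec_zero]
  obtain ⟨c, hc⟩ := exists_le_smul_of_ker_le hPMP hS hker
  have hTc : T (P * M * P) ≤ c • T S := by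
    have := hT _ (sub_nonneg.mpr hc)
    rwa [map_sub, LinearMap.map_smul_of_tower, sub_nonneg] at this
  refine (supportProj_mul_mul_supportProj_of_ker_le hS.isSelfAdjoint (hT _ hPMP).isSelfAdjoint
    fun y hy => mulVec_eq_zero_of_le (hT _ hPMP) hTc ?_).symm
  rw [smul_mulVec, hTS y hy, smul_zero]

lemma exists_nontrivial_invariant_projection (hT : ∀ M, 0 ≤ M → 0 ≤ T M) {S : Matrix n n ℂ}
    (hS : 0 ≤ S) (hS0 : S ≠ 0) {x : n → ℂ} (hx : x ≠ 0) (hSx : S *ᵥ x = 0)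
    (hTS : ∀ y, S *ᵥ y = 0 → T S *ᵥ y = 0) :
    ∃ P : Matrix n n ℂ, P.IsHermitian ∧ P * P = P ∧ P ≠ 0 ∧ P ≠ 1 ∧
      ∀ X, T (P * X * P) = P * T (P * X * P) * P := by
  refine ⟨supportProj S, isSelfAdjoint_supportProj S, supportProj_mul_self S, fun h0 => ?_,
    fun h1 => ?_, corner_invariant_supportProj hT hS hTS⟩
  · exact hS0 (by rw [← mul_supportProj hS.isSelfAdjoint, h0, mul_zero])
  · refine hx ?_
    rw [← one_mulVec x, ← h1]
    exact (supportProj_mulVec_eq_zero_iff hS.isSelfAdjoint).mpr hSx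

lemma expApply_term_nonneg (hT : ∀ M, 0 ≤ M → 0 ≤ T M) {A : Matrix n n ℂ} (hA : 0 ≤ A) {t : ℝ}
    (ht : 0 ≤ t) (m : ℕ) : 0 ≤ ((t ^ m / m.factorial : ℝ) : ℂ) • (T ^ m) A :=
  smul_nonneg (Complex.zero_le_real.mpr (by positivity)) (pow_apply_nonneg hT hA m)

lemma expApply_nonneg (hT : ∀ M, 0 ≤ M → 0 ≤ T M) {A : Matrix n n ℂ} (hA : 0 ≤ A) {t : ℝ}
    (ht : 0 ≤ t) : 0 ≤ expApply T t A :=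
  tsum_nonneg (expApply_term_nonneg hT hA ht)

lemma expApply_mulVec_eq_zero_iff (hT : ∀ M, 0 ≤ M → 0 ≤ T M) {A : Matrix n n ℂ} (hA : 0 ≤ A)
    {t : ℝ} (ht : 0 < t) {y : n → ℂ} :
    expApply T t A *ᵥ y = 0 ↔ ∀ m, (T ^ m) A *ᵥ y = 0 := by
  rw [expApply, tsum_mulVec_eq_zero_iff (summable_expApply_term T t A)
    (expApply_term_nonneg hT hA ht.le)]
  refine forall_congr' fun m => ?_
  rw [smul_mulVec, smul_eq_zero, or_iff_right]
  exact_mod_cast (by positivity : (0 : ℝ) < t ^ m / m.factorial).ne'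

lemma apply_expApply_mulVec_eq_zero (hT : ∀ M, 0 ≤ M → 0 ≤ T M) {A : Matrix n n ℂ} (hA : 0 ≤ A)
    {t : ℝ} (ht : 0 < t) {y : n → ℂ} (hy : expApply T t A *ᵥ y = 0) :
    T (expApply T t A) *ᵥ y = 0 := by
  rw [map_expApply, expApply_mulVec_eq_zero_iff hT (hT A hA) ht]
  intro m
  rw [← Module.End.mul_apply, ← pow_succ]
  exact (expApply_mulVec_eq_zero_iff hT hA ht).mp hy (m + 1)

lemma expApply_ne_zero (hT : ∀ M, 0 ≤ M → 0 ≤ T M) {A : Matrix n n ℂ} (hA : 0 ≤ A) (hA0 : A ≠ 0)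
    {t : ℝ} (ht : 0 < t) : expApply T t A ≠ 0 := by
  intro hS0
  refine hA0 (ext_of_mulVec_single fun i => ?_)
  rw [zero_mulVec]
  simpa using (expApply_mulVec_eq_zero_iff hT hA ht (y := Pi.single i 1)).mp
    (by rw [hS0, zero_mulVec]) 0

end MatrixPositiveMap

end

theorem stmt16_general (k : ℕ)
    (T : Module.End ℂ (Matrix (Fin k) (Fin k) ℂ))
    (hTpos : ∀ A : Matrix (Fin k) (Fin k) ℂ, A.PosSemidef → (T A).PosSemidef) :
    (¬ ∃ P : Matrix (Fin k) (Fin k) ℂ,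
        P.IsHermitian ∧ P * P = P ∧ P ≠ 0 ∧ P ≠ 1 ∧
        ∀ A : Matrix (Fin k) (Fin k) ℂ, T (P * A * P) = P * (T (P * A * P)) * P) ↔
    (∀ A : Matrix (Fin k) (Fin k) ℂ, A.PosSemidef → A ≠ 0 → ∀ t : ℝ, 0 < t →
        (∑' m : ℕ, ((t ^ m / m.factorial : ℝ) : ℂ) • (T ^ m) A).PosDef) := by
  open scoped MatrixOrder in
  have hT : ∀ M : Matrix (Fin k) (Fin k) ℂ, 0 ≤ M → 0 ≤ T M := fun M hM =>
    Matrix.nonneg_iff_posSemidef.mpr (hTpos M (Matrix.nonneg_iff_posSemidef.mp hM))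
  constructor
  · intro hirr A hA hA0 t ht
    have hS := expApply_nonneg hT hA.nonneg ht.le
    refine (Matrix.nonneg_iff_posSemidef.mp hS).posDef_iff_mulVec_eq_zero.mpr fun x hx => ?_
    by_contra hx0
    exact hirr (exists_nontrivial_invariant_projection hT hS (expApply_ne_zero hT hA.nonneg hA0 ht)
      hx0 hx fun y => apply_expApply_mulVec_eq_zero hT hA.nonneg ht)
  · rintro hpos ⟨P, hPh, hPP, hP0, hP1, hinv⟩
    obtain ⟨y, hy0, hPy⟩ := Matrix.exists_mulVec_eq_zero_of_ne_one hPP hP1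
    have hP : P.PosSemidef := by
      simpa [hPh.eq, hPP] using Matrix.posSemidef_conjTranspose_mul_self P
    have hS : (expApply T 1 P).PosDef := hpos P hP hP0 1 one_pos
    have hSy : expApply T 1 P *ᵥ y = 0 := (expApply_mulVec_eq_zero_iff hT hP.nonneg one_pos).mpr
      fun m => by rw [pow_apply_corner hPP hinv m, ← Matrix.mulVec_mulVec, hPy, Matrix.mulVec_zero]
    simpa [hSy] using hS.dotProduct_mulVec_pos hy0

/-- For a positive linear map `T` on `M_k(ℂ)`, the following are
equivalent: (1) there is no nontrivial orthogonal projection `P` with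
`T(P M_k(ℂ) P) ⊆ P M_k(ℂ) P`; (2) for every nonzero positive semidefinite `A`
and every `t > 0`, `exp(tT)(A) = Σ_m (t^m/m!) T^m(A)` is positive definite. -/
theorem stmt16 (k : ℕ) (hk : 0 < k)
    (T : Module.End ℂ (Matrix (Fin k) (Fin k) ℂ))
    (hTpos : ∀ A : Matrix (Fin k) (Fin k) ℂ, A.PosSemidef → (T A).PosSemidef) :
    (¬ ∃ P : Matrix (Fin k) (Fin k) ℂ,
        P.IsHermitian ∧ P * P = P ∧ P ≠ 0 ∧ P ≠ 1 ∧
        ∀ A : Matrix (Fin k) (Fin k) ℂ, T (P * A * P) = P * (T (P * A * P)) * P) ↔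
    (∀ A : Matrix (Fin k) (Fin k) ℂ, A.PosSemidef → A ≠ 0 → ∀ t : ℝ, 0 < t →
        (∑' m : ℕ, ((t ^ m / m.factorial : ℝ) : ℂ) • (T ^ m) A).PosDef) :=
  stmt16_general k T hTpos
end

section
/- Let φ, φ' be states on M_k(ℂ), and L : A → M_k(ℂ) a unital completely positive map from a unital C*-algebra A. Denote by Ξ(σ) := σ ∘ L the induced states on A for states σ on M_k(ℂ). If ‖Ξ(φ) − Ξ(φ')‖ = 2 (the maximal possible norm distance), then the support projections of φ and φ' in M_k(ℂ) are orthogonal. Equivalently: if the supports of φ and φ' are not orthogonal, then ‖Ξ(φ) − Ξ(φ')‖ < 2. -/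
/-!
A unital completely positive map into a matrix algebra is contractive (Kadison–Schwarz, together
with `‖a‖² - a⋆a = b⋆b` in `A`), so `‖Ξ(φ) - Ξ(φ')‖` is at most the trace norm
`∑ |λᵢ|` of `ρ - ρ'`. If `S` is the symmetry `sign (ρ - ρ')`, then
`∑ |λᵢ| = tr (S (ρ - ρ')) = 2 - tr ((1 - S) ρ) - tr ((1 + S) ρ')` with both traces nonnegative.
Were both zero, positivity would give `ρ (1 - S) = 0 = (1 + S) ρ'`, hence
`2 ρ ρ' = ρ (1 - S) ρ' + ρ (1 + S) ρ' = 0`.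
-/

open scoped Matrix ComplexOrder

namespace Matrix

variable {n : Type*} [Fintype n] [DecidableEq n]

open scoped MatrixOrder Norms.L2Operator in
theorem PosSemidef.exists_eq_conjTranspose_mul_self {P : Matrix n n ℂ} (hP : P.PosSemidef) :
    ∃ B : Matrix n n ℂ, P = Bᴴ * B :=
  CStarAlgebra.nonneg_iff_eq_star_mul_self.mp hP.nonneg

theorem PosSemidef.trace_mul_nonneg {P Q : Matrix n n ℂ} (hP : P.PosSemidef)
    (hQ : Q.PosSemidef) : 0 ≤ (P * Q).trace := by
  obtain ⟨B, rfl⟩ := hP.exists_eq_conjTranspose_mul_self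
  rw [mul_assoc, trace_mul_comm]
  exact (hQ.mul_mul_conjTranspose_same B).trace_nonneg

theorem PosSemidef.mul_eq_zero_of_trace_mul_eq_zero {P Q : Matrix n n ℂ} (hP : P.PosSemidef)
    (hQ : Q.PosSemidef) (h : (P * Q).trace = 0) : P * Q = 0 := by
  obtain ⟨B, rfl⟩ := hP.exists_eq_conjTranspose_mul_self
  obtain ⟨C, rfl⟩ := hQ.exists_eq_conjTranspose_mul_self
  have hCB : C * Bᴴ = 0 := by
    rw [← trace_conjTranspose_mul_self_eq_zero_iff, ← h, trace_mul_comm (Bᴴ * B)]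
    simp only [conjTranspose_mul, conjTranspose_conjTranspose, mul_assoc]
    rw [trace_mul_comm]
    simp only [mul_assoc]
  calc Bᴴ * B * (Cᴴ * C) = Bᴴ * (C * Bᴴ)ᴴ * C := by
        simp only [conjTranspose_mul, conjTranspose_conjTranspose, mul_assoc]
    _ = 0 := by rw [hCB, conjTranspose_zero, mul_zero, zero_mul]

open scoped Norms.L2Operator in
theorem norm_apply_le_l2_opNorm {m : Type*} [Fintype m] (N : Matrix m n ℂ) (i : m) (j : n) :
    ‖N i j‖ ≤ ‖N‖ := by
  calc ‖N i j‖ = ‖(EuclideanSpace.equiv m ℂ).symm (N *ᵥ EuclideanSpace.single j 1) i‖ := by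
        simp
    _ ≤ ‖(EuclideanSpace.equiv m ℂ).symm (N *ᵥ EuclideanSpace.single j 1)‖ :=
        PiLp.norm_apply_le _ _
    _ ≤ ‖N‖ * ‖EuclideanSpace.single j (1 : ℂ)‖ := N.l2_opNorm_mulVec _
    _ = ‖N‖ := by simp

theorem posSemidef_conjStarAlgAut_diagonal (U : unitaryGroup n ℂ) {d : n → ℂ}
    (hd : ∀ i, 0 ≤ d i) : (Unitary.conjStarAlgAut ℂ _ U (diagonal d)).PosSemidef := by
  rw [Unitary.conjStarAlgAut_apply, star_eq_conjTranspose]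
  exact (posSemidef_diagonal_iff.mpr hd).mul_mul_conjTranspose_same _

namespace IsHermitian

variable {D : Matrix n n ℂ} (hD : D.IsHermitian)

theorem trace_mul_eq_sum (M : Matrix n n ℂ) :
    (D * M).trace = ∑ i, (hD.eigenvalues i : ℂ) *
      ((star (hD.eigenvectorUnitary : Matrix n n ℂ)) * M * hD.eigenvectorUnitary) i i := by
  conv_lhs => rw [hD.spectral_theorem, Unitary.conjStarAlgAut_apply]
  rw [mul_assoc, mul_assoc, trace_mul_comm, mul_assoc]
  simp only [trace, diag, diagonal_mul, Function.comp_apply]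
  rfl

open scoped Norms.L2Operator in
theorem norm_trace_mul_le (M : Matrix n n ℂ) :
    ‖(D * M).trace‖ ≤ (∑ i, |hD.eigenvalues i|) * ‖M‖ := by
  rw [hD.trace_mul_eq_sum, Finset.sum_mul]
  refine (norm_sum_le _ _).trans (Finset.sum_le_sum fun i _ => ?_)
  rw [norm_mul, Complex.norm_real, Real.norm_eq_abs]
  gcongr
  calc _ ≤ ‖star (hD.eigenvectorUnitary : Matrix n n ℂ) * M * hD.eigenvectorUnitary‖ :=
        norm_apply_le_l2_opNorm _ _ _
    _ = ‖M‖ := by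
        rw [CStarRing.norm_mul_coe_unitary, ← Unitary.coe_star, CStarRing.norm_coe_unitary_mul]

noncomputable def sign : Matrix n n ℂ :=
  Unitary.conjStarAlgAut ℂ _ hD.eigenvectorUnitary
    (diagonal fun i => if 0 ≤ hD.eigenvalues i then 1 else -1)

theorem trace_sign_mul : (hD.sign * D).trace = ∑ i, ((|hD.eigenvalues i| : ℝ) : ℂ) := by
  rw [sign, trace_mul_comm, hD.trace_mul_eq_sum, Unitary.conjStarAlgAut_apply]
  simp only [← mul_assoc, Unitary.coe_star_mul_self, one_mul]
  simp only [mul_assoc, Unitary.coe_star_mul_self, mul_one, diagonal_apply_eq]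
  refine Finset.sum_congr rfl fun i _ => ?_
  split_ifs with h
  · simp [abs_of_nonneg h]
  · simp [abs_of_neg (not_le.mp h)]

theorem posSemidef_one_sub_sign : (1 - hD.sign).PosSemidef := by
  rw [sign, ← map_one (Unitary.conjStarAlgAut ℂ _ hD.eigenvectorUnitary), ← map_sub,
    ← diagonal_one, diagonal_sub]
  refine posSemidef_conjStarAlgAut_diagonal _ fun i => ?_
  split_ifs <;> norm_num

theorem posSemidef_one_add_sign : (1 + hD.sign).PosSemidef := by
  rw [sign, ← map_one (Unitary.conjStarAlgAut ℂ _ hD.eigenvectorUnitary), ← map_add,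
    ← diagonal_one, diagonal_add]
  refine posSemidef_conjStarAlgAut_diagonal _ fun i => ?_
  split_ifs <;> norm_num

end IsHermitian

theorem sum_abs_eigenvalues_sub_lt_two {ρ ρ' : Matrix n n ℂ} (hρ : ρ.PosSemidef)
    (hρ' : ρ'.PosSemidef) (hρtr : ρ.trace = 1) (hρ'tr : ρ'.trace = 1) (hρρ' : ρ * ρ' ≠ 0) :
    ∑ i, |(hρ.1.sub hρ'.1).eigenvalues i| < 2 := by
  set hD := hρ.1.sub hρ'.1
  set a := ((1 - hD.sign) * ρ).trace
  set b := ((1 + hD.sign) * ρ').trace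
  have ha : 0 ≤ a := hD.posSemidef_one_sub_sign.trace_mul_nonneg hρ
  have hb : 0 ≤ b := hD.posSemidef_one_add_sign.trace_mul_nonneg hρ'
  have hsum : ((∑ i, |hD.eigenvalues i| : ℝ) : ℂ) = 2 - (a + b) := by
    push_cast
    rw [← hD.trace_sign_mul]
    simp only [a, b, mul_sub, sub_mul, add_mul, one_mul, trace_sub, trace_add, hρtr, hρ'tr]
    ring
  have hab : 0 < a + b := by
    refine (add_nonneg ha hb).lt_of_ne fun h => hρρ' ?_
    obtain ⟨ha0, hb0⟩ := (add_eq_zero_iff_of_nonneg ha hb).mp h.symm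
    have h1 : ρ * (1 - hD.sign) = 0 :=
      hρ.mul_eq_zero_of_trace_mul_eq_zero hD.posSemidef_one_sub_sign (by rwa [trace_mul_comm])
    have h2 : (1 + hD.sign) * ρ' = 0 :=
      hD.posSemidef_one_add_sign.mul_eq_zero_of_trace_mul_eq_zero hρ' hb0
    have h : (2 : ℂ) • (ρ * ρ') = ρ * (1 - hD.sign) * ρ' + ρ * ((1 + hD.sign) * ρ') := by
      rw [two_smul]
      noncomm_ring
    rw [h1, h2, zero_mul, mul_zero, add_zero, smul_eq_zero] at h
    exact h.resolve_left two_ne_zero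
  have : ((∑ i, |hD.eigenvalues i| : ℝ) : ℂ) < 2 := by
    rw [hsum]
    exact sub_lt_self _ hab
  exact_mod_cast this

end Matrix

/-- Complete positivity in Gram form, equivalent to positivity of every amplification
`L ⊗ id : Mₘ(A) → Mₘ(Mₙ(ℂ))`. -/
def LinearMap.IsCompletelyPositive {A n : Type*} [Fintype n] [Ring A] [StarRing A] [Module ℂ A]
    (L : A →ₗ[ℂ] Matrix n n ℂ) : Prop :=
  ∀ (m : ℕ) (a : Fin m → A) (x : Fin m → Matrix n n ℂ),
    (∑ i, ∑ j, (x i)ᴴ * L (star (a i) * a j) * x j).PosSemidef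

namespace LinearMap.IsCompletelyPositive

section Ring

variable {A n : Type*} [Fintype n] [DecidableEq n] [Ring A] [StarRing A] [Module ℂ A]
  {L : A →ₗ[ℂ] Matrix n n ℂ} (hL : L.IsCompletelyPositive)
include hL

theorem posSemidef_map_star_mul_self (b : A) : (L (star b * b)).PosSemidef := by
  simpa using hL 1 ![b] ![1]

-- The Gram condition for `a = ![1, b]` and `x = ![c, 1]`.
theorem posSemidef_two_by_two (b : A) (c : Matrix n n ℂ) :
    (cᴴ * L 1 * c + cᴴ * L b + L (star b) * c + L (star b * b)).PosSemidef := by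
  convert hL 2 ![1, b] ![c, 1] using 1
  simp only [Fin.sum_univ_two, Matrix.cons_val_zero, Matrix.cons_val_one, star_one, one_mul,
    mul_one, Matrix.conjTranspose_one]
  abel

theorem map_star (b : A) : L (star b) = (L b)ᴴ := by
  have hherm (γ : ℂ) : (star γ • L b + γ • L (star b)).IsHermitian := by
    have h := (hL.posSemidef_two_by_two b (γ • 1)).isHermitian.sub
      (((hL.posSemidef_map_star_mul_self 1).conjTranspose_mul_mul_same (γ • 1)).isHermitian.add
        (hL.posSemidef_map_star_mul_self b).isHermitian)
    convert h using 1
    simp only [star_one, Matrix.conjTranspose_smul, Matrix.conjTranspose_one, Matrix.smul_mul,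
      Matrix.mul_smul, one_mul, mul_one]
    abel
  have h1 := (hherm 1).eq
  have h2 := (hherm Complex.I).eq
  simp only [Matrix.conjTranspose_add, Matrix.conjTranspose_smul, star_one, one_smul,
    Complex.star_def, Complex.conj_I, map_neg, neg_neg] at h1 h2
  linear_combination (norm := match_scalars <;> ring_nf <;> simp [Complex.I_sq])
    (-(1 : ℂ) / 2) • h1 + (Complex.I / 2) • h2

theorem posSemidef_map_star_mul_self_sub (hL1 : L 1 = 1) (a : A) :
    (L (star a * a) - (L a)ᴴ * L a).PosSemidef := by
  convert hL.posSemidef_two_by_two a (-L a) using 1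
  rw [hL.map_star, hL1]
  noncomm_ring

end Ring

section CStarAlgebra

variable {A n : Type*} [Fintype n] [DecidableEq n] [CStarAlgebra A] {L : A →ₗ[ℂ] Matrix n n ℂ}

open scoped MatrixOrder Matrix.Norms.L2Operator in
theorem norm_map_le (hL : L.IsCompletelyPositive) (hL1 : L 1 = 1) (a : A) : ‖L a‖ ≤ ‖a‖ := by
  let := CStarAlgebra.spectralOrder A
  have := CStarAlgebra.spectralOrderedRing A
  obtain ⟨b, hb⟩ := CStarAlgebra.nonneg_iff_eq_star_mul_self.mp
    (sub_nonneg.mpr (CStarAlgebra.star_mul_le_algebraMap_norm_sq (a := a)))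
  have hL_algebraMap (r : ℝ) : L (algebraMap ℝ A r) = algebraMap ℝ (Matrix n n ℂ) r := by
    rw [Algebra.algebraMap_eq_smul_one, L.map_smul_of_tower, hL1, Algebra.algebraMap_eq_smul_one]
  have hle : star (L a) * L a ≤ algebraMap ℝ (Matrix n n ℂ) (‖a‖ ^ 2) := by
    rw [Matrix.le_iff, ← hL_algebraMap, ← sub_add_sub_cancel _ (L (star a * a)), ← map_sub, hb]
    exact (hL.posSemidef_map_star_mul_self b).add (hL.posSemidef_map_star_mul_self_sub hL1 a)
  rw [← CStarAlgebra.norm_le_iff_le_algebraMap _ (sq_nonneg _) (star_mul_self_nonneg _),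
    CStarRing.norm_star_mul_self, ← sq] at hle
  exact (pow_le_pow_iff_left₀ (norm_nonneg _) (norm_nonneg _) two_ne_zero).mp hle

open scoped Matrix.Norms.L2Operator in
theorem norm_le_sum_abs_eigenvalues (hL : L.IsCompletelyPositive) (hL1 : L 1 = 1)
    {D : Matrix n n ℂ} (hD : D.IsHermitian) {φ : A →L[ℂ] ℂ}
    (hφ : ∀ a, φ a = (D * L a).trace) : ‖φ‖ ≤ ∑ i, |hD.eigenvalues i| := by
  refine φ.opNorm_le_bound (Finset.sum_nonneg fun i _ => abs_nonneg _) fun a => ?_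
  calc ‖φ a‖ ≤ (∑ i, |hD.eigenvalues i|) * ‖L a‖ := hφ a ▸ hD.norm_trace_mul_le (L a)
    _ ≤ (∑ i, |hD.eigenvalues i|) * ‖a‖ := by
      gcongr
      exact hL.norm_map_le hL1 a

end CStarAlgebra

end LinearMap.IsCompletelyPositive

theorem stmt17_general (k : ℕ)
    (A : Type*) [NormedRing A] [StarRing A] [CStarRing A]
    [NormedAlgebra ℂ A] [StarModule ℂ A] [CompleteSpace A]
    (L : A →ₗ[ℂ] Matrix (Fin k) (Fin k) ℂ)
    (hLunital : L 1 = 1)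
    (hLcp : ∀ (m : ℕ) (a : Fin m → A) (x : Fin m → Matrix (Fin k) (Fin k) ℂ),
      (∑ i, ∑ j, (x i)ᴴ * L (star (a i) * a j) * x j).PosSemidef)
    (ρ ρ' : Matrix (Fin k) (Fin k) ℂ)
    (hρ : ρ.PosSemidef) (hρtr : ρ.trace = 1)
    (hρ' : ρ'.PosSemidef) (hρ'tr : ρ'.trace = 1)
    (ψ ψ' : A →L[ℂ] ℂ)
    (hψ : ∀ a, ψ a = (ρ * L a).trace)
    (hψ' : ∀ a, ψ' a = (ρ' * L a).trace)
    (hsupp : ρ * ρ' ≠ 0) :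
    ‖ψ - ψ'‖ < 2 := by
  let : CStarAlgebra A := {}
  have hL : L.IsCompletelyPositive := hLcp
  refine (hL.norm_le_sum_abs_eigenvalues hLunital (hρ.1.sub hρ'.1) fun a => ?_).trans_lt
    (Matrix.sum_abs_eigenvalues_sub_lt_two hρ hρ' hρtr hρ'tr hsupp)
  rw [sub_apply, hψ, hψ', Matrix.sub_mul, Matrix.trace_sub]

/-- Let `φ, φ'` be states on `M_k(ℂ)` with density matrices
`ρ, ρ'`, and `L : A → M_k(ℂ)` a unital completely positive map from a unital
C*-algebra `A`.  Write `Ξ(φ) = φ ∘ L` (given here as the continuous functionals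
`ψ, ψ'`).  If the supports of `φ` and `φ'` are not orthogonal (equivalently
`ρρ' ≠ 0`), then `‖Ξ(φ) − Ξ(φ')‖ < 2`. -/
theorem stmt17 (k : ℕ) (hk : 0 < k)
    (A : Type*) [NormedRing A] [StarRing A] [CStarRing A]
    [NormedAlgebra ℂ A] [StarModule ℂ A] [CompleteSpace A]
    (L : A →ₗ[ℂ] Matrix (Fin k) (Fin k) ℂ)
    (hLunital : L 1 = 1)
    (hLcp : ∀ (m : ℕ) (a : Fin m → A) (x : Fin m → Matrix (Fin k) (Fin k) ℂ),
      (∑ i, ∑ j, (x i)ᴴ * L (star (a i) * a j) * x j).PosSemidef)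
    (ρ ρ' : Matrix (Fin k) (Fin k) ℂ)
    (hρ : ρ.PosSemidef) (hρtr : ρ.trace = 1)
    (hρ' : ρ'.PosSemidef) (hρ'tr : ρ'.trace = 1)
    (ψ ψ' : A →L[ℂ] ℂ)
    (hψ : ∀ a, ψ a = (ρ * L a).trace)
    (hψ' : ∀ a, ψ' a = (ρ' * L a).trace)
    (hsupp : ρ * ρ' ≠ 0) :
    ‖ψ - ψ'‖ < 2 :=
  stmt17_general k A L hLunital hLcp ρ ρ' hρ hρtr hρ' hρ'tr ψ ψ' hψ hψ' hsupp
end
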